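/- Define ψ from well-tempered scoring games to normal-play partizan games by ψ(n) = n for integers n and ψ({G^L|G^R}) = {ψ(G^L)|ψ(G^R)}. Then for any well-tempered scoring game G: if G is even-tempered, ψ(G) ≥ 0 (in the partizan ordering) if and only if R(G) ≥ 0; if G is odd-tempered, ψ(G) ⊳ 0 (greater than or incomparable to 0) if and only if L(G) ≥ 0. -/

import Mathlib

/-- Well-tempered scoring game trees: an integer (final score) or a position
with lists of Left and Right options. -/
inductive WT : Type where
  | int : ℤ → WT
  | node : List WT → List WT → WT

namespace WT

/-- Left options. -/
def lopts : WT → List WT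
  | int _ => []
  | node L _ => L

/-- Right options. -/
def ropts : WT → List WT
  | int _ => []
  | node _ R => R

theorem sizeOf_lt_of_mem_lopts : ∀ {G g : WT}, g ∈ G.lopts → sizeOf g < sizeOf G := by
  intro G g h
  cases G with
  | int n => simp [lopts] at h
  | node L R =>
    simp only [lopts] at h
    have h1 := List.sizeOf_lt_of_mem h
    have h2 : sizeOf (WT.node L R) = 1 + sizeOf L + sizeOf R := by simp
    omega

theorem sizeOf_lt_of_mem_ropts : ∀ {G g : WT}, g ∈ G.ropts → sizeOf g < sizeOf G := by
  intro G g h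
  cases G with
  | int n => simp [ropts] at h
  | node L R =>
    simp only [ropts] at h
    have h1 := List.sizeOf_lt_of_mem h
    have h2 : sizeOf (WT.node L R) = 1 + sizeOf L + sizeOf R := by simp
    omega

/-- Disjunctive sum of two games. -/
def add (G H : WT) : WT :=
  match G, H with
  | int m, int n => int (m + n)
  | G, H =>
    node ((G.lopts.attach.map fun g => add g.1 H) ++ (H.lopts.attach.map fun h => add G h.1))
         ((G.ropts.attach.map fun g => add g.1 H) ++ (H.ropts.attach.map fun h => add G h.1))
termination_by sizeOf G + sizeOf H
decreasing_by
  all_goals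
    first
      | (have := sizeOf_lt_of_mem_lopts g.2; omega)
      | (have := sizeOf_lt_of_mem_lopts h.2; omega)
      | (have := sizeOf_lt_of_mem_ropts g.2; omega)
      | (have := sizeOf_lt_of_mem_ropts h.2; omega)

/-- Negation of a game: swap players and negate scores. -/
def neg : WT → WT
  | int n => int (-n)
  | node L R =>
    node ((WT.node L R).ropts.attach.map fun g => neg g.1)
         ((WT.node L R).lopts.attach.map fun g => neg g.1)
termination_by G => sizeOf G
decreasing_by
  all_goals
    first
      | exact sizeOf_lt_of_mem_lopts g.2
      | exact sizeOf_lt_of_mem_ropts g.2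

def lmax : List ℤ → ℤ
  | [] => 0
  | x :: xs => xs.foldl max x

def lmin : List ℤ → ℤ
  | [] => 0
  | x :: xs => xs.foldl min x

/-- The pair (left outcome, right outcome). -/
def out : WT → ℤ × ℤ
  | int n => (n, n)
  | node L R =>
    (lmax ((WT.node L R).lopts.attach.map fun g => (out g.1).2),
     lmin ((WT.node L R).ropts.attach.map fun g => (out g.1).1))
termination_by G => sizeOf G
decreasing_by
  all_goals
    first
      | exact sizeOf_lt_of_mem_lopts g.2
      | exact sizeOf_lt_of_mem_ropts g.2

/-- Left outcome L(G): optimal score when Left moves first. -/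
def Lout (G : WT) : ℤ := G.out.1

/-- Right outcome R(G): optimal score when Right moves first. -/
def Rout (G : WT) : ℤ := G.out.2

/-- `IsWT G p` : `G` is a well-tempered game of parity `p`
(`false` = even-tempered, `true` = odd-tempered). -/
inductive IsWT : WT → Bool → Prop where
  | int (n : ℤ) : IsWT (WT.int n) false
  | node {L R : List WT} {p : Bool} (hL : L ≠ []) (hR : R ≠ [])
      (hLp : ∀ g ∈ L, IsWT g p) (hRp : ∀ g ∈ R, IsWT g p) :
      IsWT (WT.node L R) (!p)

/-- `G` is a well-tempered game (of some parity). -/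
def Wt (G : WT) : Prop := ∃ p, IsWT G p

/-- Parity, computed structurally (`false` = even-tempered, `true` = odd-tempered;
agrees with `IsWT` on well-tempered games). -/
def par : WT → Bool
  | int _ => false
  | node [] _ => true
  | node (g :: _) _ => !(par g)

/-- Final score under optimal play when Left moves last. -/
def Lf (G : WT) : ℤ := if G.par then G.Lout else G.Rout

/-- Final score under optimal play when Right moves last. -/
def Rf (G : WT) : ℤ := if G.par then G.Rout else G.Lout

/-- `G ≲ H` : for every well-tempered `X`, `L(G+X) ≤ L(H+X)` and `R(G+X) ≤ R(H+X)`. -/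
def Le (G H : WT) : Prop :=
  ∀ X : WT, X.Wt → (G.add X).Lout ≤ (H.add X).Lout ∧ (G.add X).Rout ≤ (H.add X).Rout

/-- `G ≳ H`. -/
def Ge (G H : WT) : Prop := Le H G

/-- `G ≈ H` : equivalence of scoring games. -/
def Equiv (G H : WT) : Prop :=
  ∀ X : WT, X.Wt → (G.add X).Lout = (H.add X).Lout ∧ (G.add X).Rout = (H.add X).Rout

/-- `G` and `H` are well-tempered with the same parity. -/
def SamePar (G H : WT) : Prop := ∃ p, IsWT G p ∧ IsWT H p

/-- `G` takes values in `S`: every integer subgame lies in `S`. -/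
inductive Valued (S : Set ℤ) : WT → Prop where
  | int {n : ℤ} : n ∈ S → Valued S (WT.int n)
  | node {L R : List WT} : (∀ g ∈ L, Valued S g) → (∀ g ∈ R, Valued S g) →
      Valued S (WT.node L R)

/-- `Subgame H G` : `H` is a subgame of `G`. -/
inductive Subgame : WT → WT → Prop where
  | refl (G : WT) : Subgame G G
  | left {H G' : WT} {L R : List WT} : G' ∈ L → Subgame H G' → Subgame H (WT.node L R)
  | right {H G' : WT} {L R : List WT} : G' ∈ R → Subgame H G' → Subgame H (WT.node L R)

/-- `gap G p` : supremum of `R(H) - L(H)` over subgames `H` of `G` of parity `p`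
(as an element of `WithBot ℤ`; the supremum of the empty set is `⊥ = -∞`). -/
noncomputable def gap (G : WT) (p : Bool) : WithBot ℤ :=
  sSup {x : WithBot ℤ | ∃ H : WT, Subgame H G ∧ IsWT H p ∧ x = ((H.Rout - H.Lout : ℤ) : WithBot ℤ)}

/-- Heating by `t`. -/
def heat (t : ℤ) : WT → WT
  | int n => int n
  | node L R =>
    node ((WT.node L R).lopts.attach.map fun g => (WT.int t).add (heat t g.1))
         ((WT.node L R).ropts.attach.map fun g => (WT.int (-t)).add (heat t g.1))
termination_by G => sizeOf G
decreasing_by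
  all_goals
    first
      | exact sizeOf_lt_of_mem_lopts g.2
      | exact sizeOf_lt_of_mem_ropts g.2

end WT

universe u

namespace SetTheory

/-- Pre-games (as formerly in Mathlib's `SetTheory.PGame`). -/
inductive PGame : Type (u + 1)
  | mk : ∀ α β : Type u, (α → PGame) → (β → PGame) → PGame

namespace PGame

/-- Inner recursion (on `y`) for `leLF`, given the values for the options of `x`. -/
def leLFAux {xl xr : Type u} (fL : xl → PGame.{u} → Prop × Prop)
    (fR : xr → PGame.{u} → Prop × Prop) : PGame.{u} → Prop × Prop
  | mk yl yr yL yR =>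
    ((∀ i, (fL i (mk yl yr yL yR)).2) ∧ ∀ j, (leLFAux fL fR (yR j)).2,
      (∃ i, (leLFAux fL fR (yL i)).1) ∨ ∃ j, (fR j (mk yl yr yL yR)).1)

/-- `leLF x y = (x ≤ y, x ⧏ y)`, by recursion on `x` then `y`. -/
def leLF : PGame.{u} → PGame.{u} → Prop × Prop
  | mk _ _ xL xR => leLFAux (fun i => leLF (xL i)) (fun j => leLF (xR j))

instance : LE PGame.{u} := ⟨fun x y => (leLF x y).1⟩

/-- `x ⧏ y` : `¬ y ≤ x`. -/
def LF (x y : PGame.{u}) : Prop := ¬y ≤ x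

infix:50 " ⧏ " => PGame.LF

instance : Zero PGame.{u} := ⟨⟨PEmpty, PEmpty, PEmpty.elim, PEmpty.elim⟩⟩

instance : One PGame.{u} := ⟨⟨PUnit, PEmpty, fun _ => 0, PEmpty.elim⟩⟩

/-- Negation of a pre-game. -/
def neg : PGame.{u} → PGame.{u}
  | ⟨l, r, L, R⟩ => ⟨r, l, fun i => neg (R i), fun i => neg (L i)⟩

instance : Neg PGame.{u} := ⟨neg⟩

/-- Inner recursion (on `y`) for `add`, given the values for the options of `x`. -/
def addAux {xl xr : Type u} (fL : xl → PGame.{u} → PGame.{u})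
    (fR : xr → PGame.{u} → PGame.{u}) : PGame.{u} → PGame.{u}
  | mk yl yr yL yR =>
    mk (xl ⊕ yl) (xr ⊕ yr)
      (Sum.rec (fun i => fL i (mk yl yr yL yR)) (fun i => addAux fL fR (yL i)))
      (Sum.rec (fun i => fR i (mk yl yr yL yR)) (fun i => addAux fL fR (yR i)))

/-- Sum of pre-games. -/
def add : PGame.{u} → PGame.{u} → PGame.{u}
  | mk _ _ xL xR => addAux (fun i => add (xL i)) (fun j => add (xR j))

instance : Add PGame.{u} := ⟨add⟩

end PGame

end SetTheory

open SetTheory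

/-- The partizan game equal to the natural number `n` (in canonical integer form). -/
def natPGame : ℕ → PGame
  | 0 => 0
  | n + 1 => natPGame n + 1

/-- The partizan game equal to the integer `n`. -/
def intPGame (n : ℤ) : PGame :=
  if 0 ≤ n then natPGame n.toNat else -natPGame (-n).toNat

/-- The map ψ from well-tempered scoring games to normal-play partizan games:
ψ(n) = n for integers and ψ({Gᴸ|Gᴿ}) = {ψ(Gᴸ)|ψ(Gᴿ)}. -/
def psi : WT → PGame
  | WT.int n => intPGame n
  | WT.node L R =>
      PGame.mk {g // g ∈ (WT.node L R).lopts} {g // g ∈ (WT.node L R).ropts}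
        (fun g => psi g.1) (fun g => psi g.1)
termination_by G => sizeOf G
decreasing_by
  all_goals
    first
      | exact WT.sizeOf_lt_of_mem_lopts g.2
      | exact WT.sizeOf_lt_of_mem_ropts g.2

/-!
The option sets of `ψ G` are the images of those of `G`, so the normal-play criteria
`0 ≤ x ↔ ∀ xᴿ, 0 ⧏ xᴿ` and `0 ⧏ x ↔ ∃ xᴸ, 0 ≤ xᴸ` run in parallel with the minimax recursions
`R(G) = min L(Gᴿ)` and `L(G) = max R(Gᴸ)`; on a well-tempered node both option lists are nonempty,
so `min`/`max` are genuine. Every move flips the parity, which matches the alternation between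
`≤` and `⧏`, and the induction on the tempering bottoms out at integers, where `0 ≤ ψ(n) ↔ 0 ≤ n`.
-/

namespace SetTheory.PGame

theorem mk_le_mk_iff_leLF {xl xr yl yr : Type u} {xL : xl → PGame.{u}} {xR : xr → PGame.{u}}
    {yL : yl → PGame.{u}} {yR : yr → PGame.{u}} :
    mk xl xr xL xR ≤ mk yl yr yL yR ↔
      (∀ i, (leLF (xL i) (mk yl yr yL yR)).2) ∧ ∀ j, (leLF (mk xl xr xL xR) (yR j)).2 :=
  Iff.rfl

theorem leLF_mk_mk_snd {xl xr yl yr : Type u} {xL : xl → PGame.{u}} {xR : xr → PGame.{u}}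
    {yL : yl → PGame.{u}} {yR : yr → PGame.{u}} :
    (leLF (mk xl xr xL xR) (mk yl yr yL yR)).2 ↔
      (∃ i, mk xl xr xL xR ≤ yL i) ∨ ∃ j, xR j ≤ mk yl yr yL yR :=
  Iff.rfl

-- The recursion swaps the two arguments, so both orientations are proved together.
theorem leLF_snd_iff_lf_and_symm (x y : PGame.{u}) :
    ((leLF x y).2 ↔ x ⧏ y) ∧ ((leLF y x).2 ↔ y ⧏ x) := by
  induction x generalizing y with
  | mk xl xr xL xR ihxL ihxR =>
    induction y with
    | mk yl yr yL yR ihyL ihyR =>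
      simp only [leLF_mk_mk_snd, LF, mk_le_mk_iff_leLF, fun i => (ihyL i).2,
        fun j => (ihxR j (mk yl yr yL yR)).2, fun i => (ihxL i (mk yl yr yL yR)).1,
        fun j => (ihyR j).1, not_and_or, not_forall, not_not, and_self]

theorem leLF_snd_iff_lf (x y : PGame.{u}) : (leLF x y).2 ↔ x ⧏ y :=
  (leLF_snd_iff_lf_and_symm x y).1

theorem mk_le_mk {xl xr yl yr : Type u} {xL : xl → PGame.{u}} {xR : xr → PGame.{u}}
    {yL : yl → PGame.{u}} {yR : yr → PGame.{u}} :
    mk xl xr xL xR ≤ mk yl yr yL yR ↔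
      (∀ i, xL i ⧏ mk yl yr yL yR) ∧ ∀ j, mk xl xr xL xR ⧏ yR j := by
  simp only [← leLF_snd_iff_lf]
  rfl

theorem mk_lf_mk {xl xr yl yr : Type u} {xL : xl → PGame.{u}} {xR : xr → PGame.{u}}
    {yL : yl → PGame.{u}} {yR : yr → PGame.{u}} :
    mk xl xr xL xR ⧏ mk yl yr yL yR ↔
      (∃ i, mk xl xr xL xR ≤ yL i) ∨ ∃ j, xR j ≤ mk yl yr yL yR :=
  (leLF_snd_iff_lf _ _).symm

theorem zero_le_mk {l r : Type u} {L : l → PGame.{u}} {R : r → PGame.{u}} :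
    0 ≤ mk l r L R ↔ ∀ j, 0 ⧏ R j :=
  mk_le_mk.trans ⟨And.right, fun h => ⟨fun i => i.elim, h⟩⟩

theorem zero_lf_mk {l r : Type u} {L : l → PGame.{u}} {R : r → PGame.{u}} :
    0 ⧏ mk l r L R ↔ ∃ i, 0 ≤ L i :=
  mk_lf_mk.trans ⟨fun h => h.resolve_right fun ⟨j, _⟩ => j.elim, Or.inl⟩

def RightMoves : PGame.{u} → Type u
  | mk _ r _ _ => r

theorem zero_le_of_isEmpty_rightMoves : ∀ (x : PGame.{u}) [IsEmpty x.RightMoves], 0 ≤ x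
  | mk _ r _ _, h => zero_le_mk.2 fun j => (h.false (j : r)).elim

instance isEmpty_rightMoves_add_one : ∀ (x : PGame.{u}) [IsEmpty x.RightMoves],
    IsEmpty (x + 1).RightMoves
  | mk _ r _ _, h =>
    have : IsEmpty r := h
    inferInstanceAs (IsEmpty (r ⊕ PEmpty))

theorem not_zero_le_neg_add_one : ∀ (x : PGame.{u}) [IsEmpty x.RightMoves], ¬0 ≤ -(x + 1)
  | mk _ r _ _, h, hle => by
    have : IsEmpty r := h
    -- Right answers with `-(x + 0)`, where Left has no move.
    obtain ⟨i, -⟩ := zero_lf_mk.1 (zero_le_mk.1 hle (Sum.inr PUnit.unit))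
    exact isEmptyElim i

end SetTheory.PGame

open SetTheory PGame

instance isEmpty_rightMoves_natPGame (n : ℕ) : IsEmpty (natPGame.{u} n).RightMoves := by
  induction n with
  | zero => exact inferInstanceAs (IsEmpty PEmpty)
  | succ n _ => exact isEmpty_rightMoves_add_one (natPGame n)

theorem zero_le_intPGame_iff (n : ℤ) : 0 ≤ intPGame.{u} n ↔ 0 ≤ n := by
  rw [intPGame]
  split_ifs with hn
  · exact iff_of_true (zero_le_of_isEmpty_rightMoves _) hn
  · obtain ⟨m, hm⟩ : ∃ m, (-n).toNat = m + 1 := ⟨(-n).toNat - 1, by omega⟩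
    rw [hm]
    exact iff_of_false (not_zero_le_neg_add_one (natPGame m)) hn

namespace WT

theorem le_lmax_iff {l : List ℤ} (hl : l ≠ []) {c : ℤ} : c ≤ lmax l ↔ ∃ x ∈ l, c ≤ x := by
  obtain ⟨a, l, rfl⟩ := List.exists_cons_of_ne_nil hl
  have hmax : (a :: l).max? = some (lmax (a :: l)) := rfl
  refine ⟨fun h => ⟨_, List.max?_mem hmax, h⟩, fun ⟨x, hx, hcx⟩ => ?_⟩
  exact hcx.trans ((List.max?_le_iff hmax).1 le_rfl x hx)

theorem le_lmin_iff {l : List ℤ} (hl : l ≠ []) {c : ℤ} : c ≤ lmin l ↔ ∀ x ∈ l, c ≤ x := by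
  obtain ⟨a, l, rfl⟩ := List.exists_cons_of_ne_nil hl
  exact List.le_min?_iff rfl

theorem Lout_node (L R : List WT) : (node L R).Lout = lmax (L.map Rout) := by
  rw [Lout, out]
  exact congrArg lmax (List.attach_map_val (f := Rout))

theorem Rout_node (L R : List WT) : (node L R).Rout = lmin (R.map Lout) := by
  rw [Rout, out]
  exact congrArg lmin (List.attach_map_val (f := Lout))

end WT

open WT

theorem psi_node (L R : List WT) :
    psi (node L R) = mk {g // g ∈ L} {g // g ∈ R} (fun g => psi g.1) (fun g => psi g.1) := by
  rw [psi]
  rfl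

theorem psi_outcomes_of_isWT {G : WT} {p : Bool} (hG : IsWT G p) :
    (p = false → (0 ≤ psi G ↔ 0 ≤ G.Rout)) ∧ (p = true → (0 ⧏ psi G ↔ 0 ≤ G.Lout)) := by
  induction hG with
  | int n =>
    refine ⟨fun _ => ?_, nofun⟩
    rw [psi, zero_le_intPGame_iff, Rout, out]
  | @node L R p hL hR _ _ ihL ihR =>
    constructor
    · intro hp
      rw [psi_node, zero_le_mk, Rout_node, le_lmin_iff (mt List.map_eq_nil_iff.1 hR), List.forall_mem_map]
      simp only [Subtype.forall]
      exact forall₂_congr fun g hg => (ihR g hg).2 (by simpa using hp)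
    · intro hp
      rw [psi_node, zero_lf_mk, Lout_node, le_lmax_iff (mt List.map_eq_nil_iff.1 hL)]
      simp only [List.mem_map, exists_exists_and_eq_and, Subtype.exists, exists_prop]
      exact exists_congr fun g => and_congr_right fun hg => (ihL g hg).1 (by simpa using hp)

open scoped PGame in
/-- if G is even-tempered then ψ(G) ≥ 0 iff R(G) ≥ 0; if G is odd-tempered
then ψ(G) ⊳ 0 (i.e. 0 ⧏ ψ(G)) iff L(G) ≥ 0. -/
theorem psi_outcomes (G : WT) :
    (WT.IsWT G false → (0 ≤ psi G ↔ 0 ≤ G.Rout)) ∧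
    (WT.IsWT G true → (0 ⧏ psi G ↔ 0 ≤ G.Lout)) :=
  ⟨fun hG => (psi_outcomes_of_isWT hG).1 rfl, fun hG => (psi_outcomes_of_isWT hG).2 rfl⟩
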